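/- arXiv:2011.04901 — 2 statements merged into one kernel-verified Lean document; each statement's English description precedes it below -/
import Mathlib

section
/- Let U ⊆ ℂ be open, f, J : U → ℂ holomorphic with J'' = f · J' on U and J' nowhere vanishing. Let I ⊆ ℝ be an interval and σ : I → U a twice differentiable curve. Then σ satisfies the geodesic equation σ''(t) + f(σ(t))·(σ'(t))² = 0 for all t ∈ I if and only if (J ∘ σ)''(t) = 0 for all t ∈ I. -/
/-!
By the chain rule, `(J ∘ σ)'' = J''(σ) σ'² + J'(σ) σ''`, which under `J'' = f J'` becomes
`J'(σ) (σ'' + f(σ) σ'²)`; as `J'` does not vanish, the two equations are equivalent.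
The only subtlety is that `(J ∘ σ)''(t)` depends on `(J ∘ σ)'` on a whole neighbourhood of `t`,
where `σ` need not be differentiable. Since `J` is a local diffeomorphism near `σ t`,
`σ` is differentiable exactly where `J ∘ σ` is, so the chain rule `(J ∘ σ)' = J'(σ) σ'` holds
near `t` even with Mathlib's junk value `deriv = 0` at non-differentiable points.
-/

open Filter Topology

variable {𝕜 : Type*} [NontriviallyNormedField 𝕜] [NormedAlgebra ℝ 𝕜]

theorem OpenPartialHomeomorph.differentiableAt_of_differentiableAt_comp
    (e : OpenPartialHomeomorph 𝕜 𝕜) {σ : ℝ → 𝕜} {s : ℝ} {e' : 𝕜}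
    (hσ : ∀ᶠ r in 𝓝 s, σ r ∈ e.source) (he : HasDerivAt e e' (σ s)) (he' : e' ≠ 0)
    (h : DifferentiableAt ℝ (e ∘ σ) s) : DifferentiableAt ℝ σ s := by
  have hsymm : HasDerivAt e.symm e'⁻¹ (e (σ s)) :=
    e.hasDerivAt_symm (e.map_source hσ.self_of_nhds) he' (by rwa [e.left_inv hσ.self_of_nhds])
  have hσ_eq : σ =ᶠ[𝓝 s] e.symm ∘ (e ∘ σ) := hσ.mono fun r hr => (e.left_inv hr).symm
  exact ((hsymm.differentiableAt.restrictScalars ℝ).comp s h).congr_of_eventuallyEq hσ_eq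

variable [CompleteSpace 𝕜] {U : Set 𝕜} {J : 𝕜 → 𝕜} {σ : ℝ → 𝕜} {t : ℝ}

theorem deriv_comp_eventuallyEq_of_hasStrictDerivAt (hU : IsOpen U)
    (hJ : ∀ z ∈ U, HasStrictDerivAt J (deriv J z) z) (hJ' : ∀ z ∈ U, deriv J z ≠ 0)
    (hσt : σ t ∈ U) (hσ : ContinuousAt σ t) :
    deriv (J ∘ σ) =ᶠ[𝓝 t] fun s => deriv J (σ s) * deriv σ s := by
  have hequiv := (hJ _ hσt).hasStrictFDerivAt_equiv (hJ' _ hσt)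
  set e := hequiv.toOpenPartialHomeomorph J
  have hV : IsOpen (e.source ∩ U) := e.open_source.inter hU
  have hσV : ∀ᶠ s in 𝓝 t, ∀ᶠ r in 𝓝 s, σ r ∈ e.source ∩ U :=
    Eventually.eventually_nhds <|
      hσ.preimage_mem_nhds (hV.mem_nhds ⟨hequiv.mem_toOpenPartialHomeomorph_source, hσt⟩)
  filter_upwards [hσV] with s hs
  have hσsU : σ s ∈ U := hs.self_of_nhds.2
  by_cases hd : DifferentiableAt ℝ σ s
  · rw [((hJ _ hσsU).hasDerivAt.scomp s hd.hasDerivAt).deriv, smul_eq_mul, mul_comm]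
  · have hnd : ¬DifferentiableAt ℝ (J ∘ σ) s := fun hc =>
      hd (e.differentiableAt_of_differentiableAt_comp (hs.mono fun _ hr => hr.1)
        (hJ _ hσsU).hasDerivAt (hJ' _ hσsU) hc)
    rw [deriv_zero_of_not_differentiableAt hnd, deriv_zero_of_not_differentiableAt hd, mul_zero]

theorem deriv_deriv_comp_of_hasStrictDerivAt (hU : IsOpen U)
    (hJ : ∀ z ∈ U, HasStrictDerivAt J (deriv J z) z) (hJ' : ∀ z ∈ U, deriv J z ≠ 0)
    (hJ₂ : DifferentiableAt 𝕜 (deriv J) (σ t)) (hσt : σ t ∈ U)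
    (hσ : DifferentiableAt ℝ σ t) (hσ₂ : DifferentiableAt ℝ (deriv σ) t) :
    deriv (deriv (J ∘ σ)) t =
      deriv (deriv J) (σ t) * deriv σ t ^ 2 + deriv J (σ t) * deriv (deriv σ) t := by
  have hprod : HasDerivAt (fun s => deriv J (σ s) * deriv σ s)
      (deriv σ t • deriv (deriv J) (σ t) * deriv σ t + deriv J (σ t) * deriv (deriv σ) t) t :=
    (hJ₂.hasDerivAt.scomp t hσ.hasDerivAt).mul hσ₂.hasDerivAt
  rw [(deriv_comp_eventuallyEq_of_hasStrictDerivAt hU hJ hJ' hσt hσ.continuousAt).deriv_eq,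
    hprod.deriv, smul_eq_mul]
  ring

theorem stmt1_general (U : Set ℂ) (hU : IsOpen U) (f J : ℂ → ℂ)
    (hJ : DifferentiableOn ℂ J U)
    (hJ'' : ∀ z ∈ U, deriv (deriv J) z = f z * deriv J z)
    (hJ' : ∀ z ∈ U, deriv J z ≠ 0)
    (I : Set ℝ) (σ : ℝ → ℂ)
    (hσU : ∀ t ∈ I, σ t ∈ U)
    (hσ : ∀ t ∈ I, DifferentiableAt ℝ σ t)
    (hσ' : ∀ t ∈ I, DifferentiableAt ℝ (deriv σ) t) :
    (∀ t ∈ I, deriv (deriv σ) t + f (σ t) * (deriv σ t) ^ 2 = 0) ↔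
      (∀ t ∈ I, deriv (deriv (J ∘ σ)) t = 0) := by
  have hJa : AnalyticOnNhd ℂ J U := hJ.analyticOnNhd hU
  have hchain : ∀ t ∈ I, deriv (deriv (J ∘ σ)) t =
      deriv J (σ t) * (deriv (deriv σ) t + f (σ t) * deriv σ t ^ 2) := by
    intro t ht
    rw [deriv_deriv_comp_of_hasStrictDerivAt hU (fun z hz => (hJa z hz).hasStrictDerivAt) hJ'
      (hJa.deriv _ (hσU t ht)).differentiableAt (hσU t ht) (hσ t ht) (hσ' t ht),
      hJ'' _ (hσU t ht)]
    ring
  refine forall₂_congr fun t ht => ?_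
  rw [hchain t ht, mul_eq_zero, or_iff_right (hJ' _ (hσU t ht)), eq_comm]

/-- In a ∇-chart obtained from `J` with `J'' = f·J'` and `J'` nonvanishing, a twice
differentiable curve `σ` satisfies the geodesic equation `σ'' + (f∘σ)·(σ')² = 0`
iff `(J ∘ σ)'' ≡ 0`. -/
theorem stmt1 (U : Set ℂ) (hU : IsOpen U) (f J : ℂ → ℂ)
    (hf : DifferentiableOn ℂ f U) (hJ : DifferentiableOn ℂ J U)
    (hJ'' : ∀ z ∈ U, deriv (deriv J) z = f z * deriv J z)
    (hJ' : ∀ z ∈ U, deriv J z ≠ 0)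
    (I : Set ℝ) (hI : I.OrdConnected) (σ : ℝ → ℂ)
    (hσU : ∀ t ∈ I, σ t ∈ U)
    (hσ : ∀ t ∈ I, DifferentiableAt ℝ σ t)
    (hσ' : ∀ t ∈ I, DifferentiableAt ℝ (deriv σ) t) :
    (∀ t ∈ I, deriv (deriv σ) t + f (σ t) * (deriv σ t) ^ 2 = 0) ↔
      (∀ t ∈ I, deriv (deriv (J ∘ σ)) t = 0) :=
  stmt1_general U hU f J hJ hJ'' hJ' I σ hσU hσ hσ'
end

section
/- Let U ⊆ ℂ be open and K : U → ℂ holomorphic. Define n : U → ℝ by n(z) = exp(2·Re(K(z))). Then n is positive, smooth, and its Wirtinger derivative satisfies ∂n/∂z = n · K' on U. -/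
/-- The Wirtinger derivative `∂/∂z = (∂/∂x − i∂/∂y)/2` of a function `ℂ → ℂ`,
computed from its real Fréchet derivative. -/
noncomputable def wirtinger (n : ℂ → ℂ) (z : ℂ) : ℂ :=
  (fderiv ℝ n z 1 - Complex.I * fderiv ℝ n z Complex.I) / 2

/-- For `K` holomorphic on an open `U`, the function `n = exp(2 Re K)` is positive,
smooth, and satisfies `∂n/∂z = n · K'` on `U`. -/
theorem stmt3 (U : Set ℂ) (hU : IsOpen U) (K : ℂ → ℂ)
    (hK : DifferentiableOn ℂ K U)
    (n : ℂ → ℝ) (hn : ∀ z, n z = Real.exp (2 * (K z).re)) :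
    (∀ z ∈ U, 0 < n z) ∧ ContDiffOn ℝ (⊤ : ℕ∞) n U ∧
      ∀ z ∈ U, wirtinger (fun w => (n w : ℂ)) z = (n z : ℂ) * deriv K z := by
  have hfun : (fun w => ((n w : ℝ) : ℂ)) =
      fun w => Complex.exp (K w + starRingEnd ℂ (K w)) := by
    funext w
    rw [hn, Complex.ofReal_exp, Complex.add_conj]
  refine ⟨fun z hz => by rw [hn]; exact Real.exp_pos _, ?_, ?_⟩
  · have hKC : ContDiffOn ℂ ⊤ K U := hK.contDiffOn hU
    have hKR : ContDiffOn ℝ (⊤ : ℕ∞) K U := (hKC.restrict_scalars ℝ).of_le le_top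
    have h1 : ContDiffOn ℝ (⊤ : ℕ∞) (fun z => 2 * (K z).re) U :=
      (Complex.reCLM.contDiff.comp_contDiffOn hKR).const_smul (2 : ℝ)
    have : ContDiffOn ℝ (⊤ : ℕ∞) (fun z => Real.exp (2 * (K z).re)) U :=
      Real.contDiff_exp.comp_contDiffOn h1
    exact this.congr fun z _ => hn z
  · intro z hz
    have hKz : DifferentiableAt ℂ K z := hK.differentiableAt (hU.mem_nhds hz)
    set c := deriv K z with hc
    have hdK : HasDerivAt K c z := hKz.hasDerivAt
    have hL : HasFDerivAt K
        ((ContinuousLinearMap.smulRight (1 : ℂ →L[ℂ] ℂ) c).restrictScalars ℝ) z :=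
      hdK.hasFDerivAt.restrictScalars ℝ
    set L := ((ContinuousLinearMap.smulRight (1 : ℂ →L[ℂ] ℂ) c).restrictScalars ℝ) with hLdef
    have hM : HasFDerivAt (fun w => starRingEnd ℂ (K w))
        (Complex.conjCLE.toContinuousLinearMap.comp L) z :=
      Complex.conjCLE.toContinuousLinearMap.hasFDerivAt.comp z hL
    have hg : HasFDerivAt (fun w => K w + starRingEnd ℂ (K w))
        (L + Complex.conjCLE.toContinuousLinearMap.comp L) z := hL.add hM
    have hexp : HasDerivAt Complex.exp
        (Complex.exp (K z + starRingEnd ℂ (K z))) (K z + starRingEnd ℂ (K z)) :=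
      Complex.hasDerivAt_exp _
    have hf : HasFDerivAt (fun w => Complex.exp (K w + starRingEnd ℂ (K w)))
        (((ContinuousLinearMap.smulRight (1 : ℂ →L[ℂ] ℂ)
            (Complex.exp (K z + starRingEnd ℂ (K z)))).restrictScalars ℝ).comp
          (L + Complex.conjCLE.toContinuousLinearMap.comp L)) z :=
      (hexp.hasFDerivAt.restrictScalars ℝ).comp z hg
    have hfn : HasFDerivAt (fun w => ((n w : ℝ) : ℂ))
        (((ContinuousLinearMap.smulRight (1 : ℂ →L[ℂ] ℂ)
            (Complex.exp (K z + starRingEnd ℂ (K z)))).restrictScalars ℝ).comp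
          (L + Complex.conjCLE.toContinuousLinearMap.comp L)) z := by
      rw [hfun]; exact hf
    have hfd := hfn.fderiv
    have hval : ((Complex.exp (K z + starRingEnd ℂ (K z)) : ℂ)) = (n z : ℂ) := by
      rw [hn, Complex.ofReal_exp, Complex.add_conj]
    rw [wirtinger, hfd]
    simp only [ContinuousLinearMap.coe_comp', Function.comp_apply,
      ContinuousLinearMap.add_apply, ContinuousLinearMap.coe_restrictScalars',
      ContinuousLinearMap.smulRight_apply, ContinuousLinearMap.one_apply,
      ContinuousLinearEquiv.coe_coe, Complex.conjCLE_apply, hLdef,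
      map_mul, Complex.conj_I, smul_eq_mul]
    rw [hval]
    ring_nf
    rw [Complex.I_sq]
    simp only [map_one]
    ring
end
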